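/- Let 1/2 < p < 1, let 0 ≤ ε ≤ 1/2, and let q be a real with |q − 1/2| ≤ ε. Then H₂(p·q + (1−p)·(1−q)) ≥ H₂(1/2 + ε·(2p−1)), and consequently H₂(p·q + (1−p)·(1−q)) ≥ 1 − 4ε²·(1−2p)². -/

import Mathlib

/-- Binary entropy `H₂(x) = −x·log₂(x) − (1−x)·log₂(1−x)`,
with the convention `0·log₂(0) = 0`. -/
noncomputable def binEntropy (x : ℝ) : ℝ :=
  -x * Real.logb 2 x - (1 - x) * Real.logb 2 (1 - x)

/-! The mixture `m = p q + (1 - p)(1 - q)` satisfies `m - 1/2 = (2p - 1)(q - 1/2)`, so it lies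
within `ε (2p - 1)` of `1/2`, and `H₂` decreases with the distance from `1/2`.

The second bound is `H₂(x) ≥ 4 x (1 - x)`. With `x = (1 + t)/2` it reads `φ(t) ≤ 2 log 2 · t²`
for `φ(t) = (1 + t) log (1 + t) + (1 - t) log (1 - t) = ∑ₖ t^(2k+2) / ((k + 1)(2k + 1))`.
This power series has nonnegative coefficients and starts at `t²`, so `φ(t) / t²` is
nondecreasing on `(0, 1)`, and it tends to `φ(1) = 2 log 2`. -/

open Filter Topology

namespace Real

theorem hasSum_mul_log_one_add_add_mul_log_one_sub {t : ℝ} (ht : |t| < 1) :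
    HasSum (fun k : ℕ => t ^ (2 * k + 2) / ((k + 1) * (2 * k + 1)))
      ((1 + t) * log (1 + t) + (1 - t) * log (1 - t)) := by
  obtain ⟨ht₀, ht₁⟩ := abs_lt.1 ht
  have heven := (hasSum_pow_div_log_of_abs_lt_one (x := t ^ 2) (by
    rwa [abs_pow, sq_lt_one_iff₀ (abs_nonneg t)])).neg
  have hodd := (hasSum_log_sub_log_of_abs_lt_one ht).mul_left t
  have hlog : log (1 - t ^ 2) = log (1 + t) + log (1 - t) := by
    rw [← log_mul (by linarith) (by linarith)]; ring_nf
  rw [neg_neg, hlog] at heven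
  rw [show (1 + t) * log (1 + t) + (1 - t) * log (1 - t)
      = log (1 + t) + log (1 - t) + t * (log (1 + t) - log (1 - t)) by ring]
  refine (heven.add hodd).congr_fun fun k => ?_
  field_simp
  ring

theorem mul_log_one_add_add_mul_log_one_sub_mul_sq_le {t s : ℝ} (hts : |t| ≤ s) (hs : s < 1) :
    ((1 + t) * log (1 + t) + (1 - t) * log (1 - t)) * s ^ 2 ≤
      ((1 + s) * log (1 + s) + (1 - s) * log (1 - s)) * t ^ 2 := by
  have hs' : |s| < 1 := by rw [abs_of_nonneg ((abs_nonneg t).trans hts)]; exact hs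
  refine hasSum_le (fun k => ?_) ((hasSum_mul_log_one_add_add_mul_log_one_sub
    (hts.trans_lt hs)).mul_right _) ((hasSum_mul_log_one_add_add_mul_log_one_sub hs').mul_right _)
  have hpow : t ^ (2 * k) ≤ s ^ (2 * k) := by
    rw [pow_mul, pow_mul, ← sq_abs t]
    gcongr
  rw [div_mul_eq_mul_div, div_mul_eq_mul_div]
  refine div_le_div_of_nonneg_right ?_ (by positivity)
  calc t ^ (2 * k + 2) * s ^ 2 = t ^ (2 * k) * (t ^ 2 * s ^ 2) := by ring
    _ ≤ s ^ (2 * k) * (t ^ 2 * s ^ 2) := by gcongr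
    _ = s ^ (2 * k + 2) * t ^ 2 := by ring

theorem mul_log_one_add_add_mul_log_one_sub_le {t : ℝ} (ht₀ : 0 ≤ t) (ht₁ : t ≤ 1) :
    (1 + t) * log (1 + t) + (1 - t) * log (1 - t) ≤ 2 * log 2 * t ^ 2 := by
  obtain rfl | ht₁ := ht₁.eq_or_lt
  · norm_num
  set φ : ℝ → ℝ := fun s => (1 + s) * log (1 + s) + (1 - s) * log (1 - s) with hφ
  have hφ_cont : Continuous φ :=
    (continuous_mul_log.comp (by fun_prop)).add (continuous_mul_log.comp (by fun_prop))
  have hφ_one : φ 1 = 2 * log 2 := by norm_num [hφ]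
  have hlim : Tendsto (fun s => φ s * t ^ 2 - φ t * s ^ 2) (𝓝[<] 1)
      (𝓝 (φ 1 * t ^ 2 - φ t * 1 ^ 2)) :=
    ((((hφ_cont.tendsto 1).mul_const _).sub
      (((continuous_pow 2).tendsto 1).const_mul (φ t)))).mono_left nhdsWithin_le_nhds
  have hle := ge_of_tendsto hlim (eventually_of_mem (Ioo_mem_nhdsLT ht₁) fun s hs =>
    sub_nonneg.2 (mul_log_one_add_add_mul_log_one_sub_mul_sq_le
      ((abs_of_nonneg ht₀).trans_le hs.1.le) hs.2))
  rw [hφ_one] at hle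
  linarith

theorem binEntropy_one_add_div_two (t : ℝ) :
    Real.binEntropy ((1 + t) / 2) =
      log 2 - ((1 + t) * log (1 + t) + (1 - t) * log (1 - t)) / 2 := by
  rw [binEntropy_eq_negMulLog_add_negMulLog_one_sub,
    show 1 - (1 + t) / 2 = (1 - t) * 2⁻¹ by ring, div_eq_mul_inv, negMulLog_mul, negMulLog_mul]
  simp only [negMulLog, log_inv]
  ring

theorem four_mul_log_two_mul_le_binEntropy {x : ℝ} (hx₀ : 0 ≤ x) (hx₁ : x ≤ 1) :
    4 * log 2 * (x * (1 - x)) ≤ Real.binEntropy x := by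
  wlog hx : 2⁻¹ ≤ x generalizing x
  · simpa [mul_comm x] using this (x := 1 - x) (by linarith) (by linarith) (by linarith)
  have hφ := mul_log_one_add_add_mul_log_one_sub_le (t := 2 * x - 1) (by linarith) (by linarith)
  rw [show x = (1 + (2 * x - 1)) / 2 by ring, binEntropy_one_add_div_two]
  ring_nf at hφ ⊢
  linarith

theorem binEntropy_two_inv_add_abs_sub (x : ℝ) :
    Real.binEntropy (2⁻¹ + |x - 2⁻¹|) = Real.binEntropy x := by
  rcases abs_cases (x - 2⁻¹) with ⟨h, -⟩ | ⟨h, -⟩ <;> rw [h]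
  · ring_nf
  · rw [show 2⁻¹ + -(x - 2⁻¹) = 1 - x by ring, binEntropy_one_sub]

theorem binEntropy_le_of_abs_sub_two_inv_le {x y : ℝ} (hy : |y - 2⁻¹| ≤ 2⁻¹)
    (hxy : |x - 2⁻¹| ≤ |y - 2⁻¹|) : Real.binEntropy y ≤ Real.binEntropy x := by
  rw [← binEntropy_two_inv_add_abs_sub x, ← binEntropy_two_inv_add_abs_sub y]
  have hx := abs_nonneg (x - 2⁻¹)
  exact binEntropy_strictAntiOn.antitoneOn ⟨by linarith, by linarith⟩
    ⟨by linarith, by norm_num; linarith⟩ (by linarith)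

end Real

theorem binEntropy_eq_div_log_two (x : ℝ) : binEntropy x = Real.binEntropy x / Real.log 2 := by
  simp only [binEntropy, Real.binEntropy, Real.logb, Real.log_inv]
  ring

theorem four_mul_mul_one_sub_le_binEntropy {x : ℝ} (hx₀ : 0 ≤ x) (hx₁ : x ≤ 1) :
    4 * (x * (1 - x)) ≤ binEntropy x := by
  rw [binEntropy_eq_div_log_two, le_div_iff₀ (Real.log_pos one_lt_two)]
  linarith [Real.four_mul_log_two_mul_le_binEntropy hx₀ hx₁]

theorem binEntropy_le_of_abs_sub_two_inv_le {x y : ℝ} (hy : |y - 2⁻¹| ≤ 2⁻¹)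
    (hxy : |x - 2⁻¹| ≤ |y - 2⁻¹|) : binEntropy y ≤ binEntropy x := by
  rw [binEntropy_eq_div_log_two, binEntropy_eq_div_log_two]
  exact div_le_div_of_nonneg_right (Real.binEntropy_le_of_abs_sub_two_inv_le hy hxy)
    (Real.log_nonneg one_le_two)

/-- Let `1/2 < p < 1`, `0 ≤ ε ≤ 1/2`, and `|q − 1/2| ≤ ε`. Then
`H₂(p·q + (1−p)·(1−q)) ≥ H₂(1/2 + ε·(2p−1))`, and consequently
`H₂(p·q + (1−p)·(1−q)) ≥ 1 − 4ε²·(1−2p)²`. -/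
theorem binEntropy_mix_lower_bound (p ε q : ℝ)
    (hp0 : 1/2 < p) (hp1 : p < 1)
    (hε0 : 0 ≤ ε) (hε1 : ε ≤ 1/2)
    (hq : |q - 1/2| ≤ ε) :
    binEntropy (p * q + (1 - p) * (1 - q)) ≥ binEntropy (1/2 + ε * (2 * p - 1)) ∧
    binEntropy (p * q + (1 - p) * (1 - q)) ≥ 1 - 4 * ε ^ 2 * (1 - 2 * p) ^ 2 := by
  set δ := ε * (2 * p - 1) with hδ_def
  have hδ₀ : 0 ≤ δ := mul_nonneg hε0 (by linarith)
  have hδ₁ : δ ≤ 2⁻¹ := by nlinarith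
  have hδ : |1/2 + δ - 2⁻¹| = δ := by norm_num [abs_of_nonneg hδ₀]
  have hmix : |p * q + (1 - p) * (1 - q) - 2⁻¹| ≤ δ := by
    rw [show p * q + (1 - p) * (1 - q) - 2⁻¹ = (2 * p - 1) * (q - 1/2) by ring, abs_mul,
      abs_of_pos (by linarith), mul_comm]
    exact mul_le_mul_of_nonneg_right hq (by linarith)
  have hfirst := binEntropy_le_of_abs_sub_two_inv_le (hδ ▸ hδ₁) (hδ ▸ hmix)
  refine ⟨hfirst, le_trans ?_ hfirst⟩
  calc 1 - 4 * ε ^ 2 * (1 - 2 * p) ^ 2 = 4 * ((1/2 + δ) * (1 - (1/2 + δ))) := by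
        rw [hδ_def]; ring
    _ ≤ binEntropy (1/2 + δ) := four_mul_mul_one_sub_le_binEntropy (by linarith) (by linarith)
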